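/- arXiv:2202.12981 — 2 statements merged into one kernel-verified Lean document; each statement's English description precedes it below -/
import Mathlib

section
/- For every positive-definite real n×n matrix Σ, one has φ_{Σ₀}(Σ) ≥ φ_{Σ₀}(Σ₀). Equivalently, the true covariance matrix Σ₀ maximizes over positive-definite Σ the expected Vecchia log-likelihood E_{y∼N_n(0,Σ₀)}[ ∑_{i=1}^n log p_Σ(y_i | y_{c(i)}) ]. -/
open Matrix

noncomputable section

/-- The principal submatrix of `M` on the index set `S`. -/
def psub {n : ℕ} (M : Matrix (Fin n) (Fin n) ℝ) (S : Finset (Fin n)) :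
    Matrix {x // x ∈ S} {x // x ∈ S} ℝ :=
  M.submatrix (fun i => (i : Fin n)) (fun j => (j : Fin n))

/-- The Vecchia cross-entropy functional
`φ_{C₀}(Σ) = ∑ i, [ ( tr((Σ_{A(i)})⁻¹ (C₀)_{A(i)}) + log det Σ_{A(i)} )
              − ( tr((Σ_{c(i)})⁻¹ (C₀)_{c(i)}) + log det Σ_{c(i)} ) ]`
where `A(i) = {i} ∪ c(i)`. -/
def vecchiaCrossEntropy {n : ℕ} (c : Fin n → Finset (Fin n))
    (C₀ C₁ : Matrix (Fin n) (Fin n) ℝ) : ℝ :=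
  ∑ i : Fin n,
    ((Matrix.trace ((psub C₁ (insert i (c i)))⁻¹ * psub C₀ (insert i (c i))) +
        Real.log (psub C₁ (insert i (c i))).det) -
      (Matrix.trace ((psub C₁ (c i))⁻¹ * psub C₀ (c i)) +
        Real.log (psub C₁ (c i)).det))

/-!
Each summand of the Vecchia functional is the Gaussian cross-entropy of the conditional law of
`y_i` given `y_{c(i)}`. Write `Σ_{A(i)}` in blocks `(A b; bᵀ d)` over `c(i) ⊕ {i}` and let
`s = d - bᵀ A⁻¹ b` be its Schur complement. Then the differences of traces and of
log-determinants in the summand collapse to `k / s + log s`, where `k = xᵀ (Σ₀)_{A(i)} x` is the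
`Σ₀`-variance of the regression residual `xᵀ y` with `x = (-A⁻¹ b, 1)`. This variance is
smallest, equal to the Schur complement `s₀` of `(Σ₀)_{A(i)}`, when `Σ = Σ₀`, and
`s₀ / s + log s ≥ 1 + log s₀` is `log t ≤ t - 1`. Hence every summand is minimized at `Σ = Σ₀`.
-/

namespace Matrix

variable {l m n R : Type*} [Fintype l] [Fintype m] [Fintype n]

section AddCommMonoid

variable [AddCommMonoid R]

lemma trace_fromBlocks (A : Matrix m m R) (B : Matrix m n R) (C : Matrix n m R)
    (D : Matrix n n R) : (fromBlocks A B C D).trace = A.trace + D.trace := by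
  simp [trace, Fintype.sum_sum_type]

lemma trace_submatrix_equiv (M : Matrix m m R) (e : l ≃ m) :
    (M.submatrix e e).trace = M.trace :=
  e.sum_comp M.diag

end AddCommMonoid

variable [DecidableEq m] [DecidableEq n] [CommRing R]

def schurCompl₁₁ (Q : Matrix (m ⊕ n) (m ⊕ n) R) : Matrix n n R :=
  Q.toBlocks₂₂ - Q.toBlocks₂₁ * Q.toBlocks₁₁⁻¹ * Q.toBlocks₁₂

/-- The block column `(-A⁻¹B; 1)`: for a Gaussian vector `y = (y₁, y₂)` with covariance
`Q = (A B; C D)`, `(schurColumn Q)ᵀ y` is the residual of `y₂` after regression on `y₁`. -/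
def schurColumn (Q : Matrix (m ⊕ n) (m ⊕ n) R) : Matrix (m ⊕ n) n R :=
  fromRows (-(Q.toBlocks₁₁⁻¹ * Q.toBlocks₁₂)) 1

variable {Q : Matrix (m ⊕ n) (m ⊕ n) R}

lemma mul_schurColumn (hA : IsUnit Q.toBlocks₁₁.det) :
    Q * schurColumn Q = fromRows 0 (schurCompl₁₁ Q) := by
  conv_lhs => enter [1]; rw [← fromBlocks_toBlocks Q]
  rw [schurColumn, fromBlocks_mul_fromRows, Matrix.mul_neg, ← Matrix.mul_assoc,
    mul_nonsing_inv _ hA, Matrix.mul_neg, ← Matrix.mul_assoc, schurCompl₁₁]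
  simp [sub_eq_neg_add]

lemma schurColumn_transpose_mul_mul_self (hA : IsUnit Q.toBlocks₁₁.det) :
    (schurColumn Q)ᵀ * Q * schurColumn Q = schurCompl₁₁ Q := by
  rw [Matrix.mul_assoc, mul_schurColumn hA, schurColumn, transpose_fromRows,
    fromCols_mul_fromRows]
  simp

lemma transpose_mul_mul_eq_schurCompl₁₁_add (hQ : Q.IsSymm) (hA : IsUnit Q.toBlocks₁₁.det)
    (X : Matrix (m ⊕ n) n R) (hX : X.toRows₂ = 1) :
    Xᵀ * Q * X = schurCompl₁₁ Q + (X - schurColumn Q)ᵀ * Q * (X - schurColumn Q) := by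
  set Y := X - schurColumn Q
  have hY : Y = fromRows Y.toRows₁ 0 := by
    conv_lhs => rw [← fromRows_toRows Y]
    congr 1
    ext i j
    simpa [Y, schurColumn, sub_eq_zero] using congrFun (congrFun hX i) j
  have hYQ : Yᵀ * Q * schurColumn Q = 0 := by
    rw [Matrix.mul_assoc, mul_schurColumn hA, hY, transpose_fromRows, fromCols_mul_fromRows]
    simp
  have hQY : (schurColumn Q)ᵀ * Q * Y = 0 := by
    rw [← transpose_transpose ((schurColumn Q)ᵀ * Q * Y)]
    simp only [transpose_mul, transpose_transpose, hQ.eq, ← Matrix.mul_assoc, hYQ, transpose_zero]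
  rw [show X = Y + schurColumn Q by simp [Y], transpose_add, Matrix.add_mul, Matrix.add_mul,
    Matrix.mul_add, Matrix.mul_add, hYQ, hQY, schurColumn_transpose_mul_mul_self hA]
  abel

lemma inv_eq_fromBlocks_add_schurColumn (hQ : Q.IsSymm) (hA : IsUnit Q.toBlocks₁₁.det)
    (hS : IsUnit (schurCompl₁₁ Q).det) :
    Q⁻¹ = fromBlocks Q.toBlocks₁₁⁻¹ 0 0 0 +
      schurColumn Q * (schurCompl₁₁ Q)⁻¹ * (schurColumn Q)ᵀ := by
  have hAsymm : Q.toBlocks₁₁⁻¹ᵀ = Q.toBlocks₁₁⁻¹ := by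
    rw [transpose_nonsing_inv, (isSymm_fromBlocks_iff.mp (fromBlocks_toBlocks Q ▸ hQ)).1.eq]
  have hBC : Q.toBlocks₁₂ᵀ = Q.toBlocks₂₁ :=
    (isSymm_fromBlocks_iff.mp (fromBlocks_toBlocks Q ▸ hQ)).2.1
  have hQX : Q * (schurColumn Q * (schurCompl₁₁ Q)⁻¹ * (schurColumn Q)ᵀ) =
      fromBlocks 0 0 (-(Q.toBlocks₂₁ * Q.toBlocks₁₁⁻¹)) 1 := by
    rw [← Matrix.mul_assoc, ← Matrix.mul_assoc, mul_schurColumn hA, fromRows_mul,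
      Matrix.zero_mul, mul_nonsing_inv _ hS, schurColumn, transpose_fromRows,
      fromRows_mul_fromCols, transpose_neg, transpose_mul, hAsymm, hBC]
    simp
  have hQA : Q * fromBlocks Q.toBlocks₁₁⁻¹ 0 0 0 =
      fromBlocks 1 0 (Q.toBlocks₂₁ * Q.toBlocks₁₁⁻¹) 0 := by
    conv_lhs => enter [1]; rw [← fromBlocks_toBlocks Q]
    simp [fromBlocks_multiply, mul_nonsing_inv _ hA]
  refine inv_eq_right_inv ?_
  rw [Matrix.mul_add, hQA, hQX, fromBlocks_add]
  simp

lemma trace_inv_mul_eq_add (hQ : Q.IsSymm) (hA : IsUnit Q.toBlocks₁₁.det)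
    (hS : IsUnit (schurCompl₁₁ Q).det) (P : Matrix (m ⊕ n) (m ⊕ n) R) :
    (Q⁻¹ * P).trace = (Q.toBlocks₁₁⁻¹ * P.toBlocks₁₁).trace +
      ((schurCompl₁₁ Q)⁻¹ * ((schurColumn Q)ᵀ * P * schurColumn Q)).trace := by
  rw [inv_eq_fromBlocks_add_schurColumn hQ hA hS, Matrix.add_mul, trace_add]
  congr 1
  · conv_lhs => enter [1, 2]; rw [← fromBlocks_toBlocks P]
    simp [fromBlocks_multiply, trace_fromBlocks]
  · rw [Matrix.mul_assoc, trace_mul_comm, trace_mul_comm (schurCompl₁₁ Q)⁻¹]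
    simp only [Matrix.mul_assoc]

lemma det_eq_det_toBlocks₁₁_mul_det_schurCompl₁₁ (hA : IsUnit Q.toBlocks₁₁.det) :
    Q.det = Q.toBlocks₁₁.det * (schurCompl₁₁ Q).det := by
  let := Q.toBlocks₁₁.invertibleOfIsUnitDet hA
  conv_lhs => rw [← fromBlocks_toBlocks Q]
  rw [det_fromBlocks₁₁, invOf_eq_nonsing_inv, schurCompl₁₁]

lemma PosDef.det_schurCompl₁₁_pos {Q : Matrix (m ⊕ n) (m ⊕ n) ℝ} (hQ : Q.PosDef) :
    0 < (schurCompl₁₁ Q).det := by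
  have hA : Q.toBlocks₁₁.PosDef := hQ.submatrix Sum.inl_injective
  have hdet := det_eq_det_toBlocks₁₁_mul_det_schurCompl₁₁ hA.det_pos.ne'.isUnit
  exact pos_of_mul_pos_right (hdet ▸ hQ.det_pos) hA.det_pos.le

end Matrix

/-- `-2 E_{y ∼ N(0, P)} [log p_{N(0, Q)}(y)]`, up to the additive constant `card ι * log (2π)`. -/
def gaussianCrossEntropy {ι : Type*} [Fintype ι] [DecidableEq ι] (P Q : Matrix ι ι ℝ) : ℝ :=
  (Q⁻¹ * P).trace + Real.log Q.det

section

variable {ι κ : Type*} [Fintype ι] [DecidableEq ι] [Fintype κ] [DecidableEq κ]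

lemma gaussianCrossEntropy_submatrix_equiv (P Q : Matrix ι ι ℝ) (e : κ ≃ ι) :
    gaussianCrossEntropy (P.submatrix e e) (Q.submatrix e e) = gaussianCrossEntropy P Q := by
  rw [gaussianCrossEntropy, inv_submatrix_equiv, submatrix_mul_equiv, trace_submatrix_equiv,
    det_submatrix_equiv_self, gaussianCrossEntropy]

lemma gaussianCrossEntropy_unit (P Q : Matrix Unit Unit ℝ) :
    gaussianCrossEntropy P Q = P () () / Q () () + Real.log (Q () ()) := by
  simp [gaussianCrossEntropy, trace, mul_apply, div_eq_inv_mul]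

lemma gaussianCrossEntropy_self_le_unit {S₀ S M : Matrix Unit Unit ℝ} (hS₀ : 0 < S₀ () ())
    (hS : 0 < S () ()) (hM : S₀ () () ≤ M () ()) :
    gaussianCrossEntropy S₀ S₀ ≤ gaussianCrossEntropy M S := by
  have hlog := Real.log_le_sub_one_of_pos (div_pos hS₀ hS)
  rw [Real.log_div hS₀.ne' hS.ne'] at hlog
  have hdiv : S₀ () () / S () () ≤ M () () / S () () := by gcongr
  rw [gaussianCrossEntropy_unit, gaussianCrossEntropy_unit, div_self hS₀.ne']
  linarith

lemma gaussianCrossEntropy_sub_toBlocks₁₁ (P : Matrix (ι ⊕ κ) (ι ⊕ κ) ℝ)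
    {Q : Matrix (ι ⊕ κ) (ι ⊕ κ) ℝ} (hQ : Q.PosDef) :
    gaussianCrossEntropy P Q - gaussianCrossEntropy P.toBlocks₁₁ Q.toBlocks₁₁ =
      gaussianCrossEntropy ((schurColumn Q)ᵀ * P * schurColumn Q) (schurCompl₁₁ Q) := by
  have hA : Q.toBlocks₁₁.PosDef := hQ.submatrix Sum.inl_injective
  have hS := hQ.det_schurCompl₁₁_pos
  have hAu : IsUnit Q.toBlocks₁₁.det := hA.det_pos.ne'.isUnit
  rw [gaussianCrossEntropy, gaussianCrossEntropy, gaussianCrossEntropy,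
    trace_inv_mul_eq_add (isHermitian_iff_isSymm.mp hQ.isHermitian) hAu hS.ne'.isUnit,
    det_eq_det_toBlocks₁₁_mul_det_schurCompl₁₁ hAu, Real.log_mul hA.det_pos.ne' hS.ne']
  ring

lemma gaussianCrossEntropy_sub_toBlocks₁₁_le {P Q : Matrix (ι ⊕ Unit) (ι ⊕ Unit) ℝ}
    (hP : P.PosDef) (hQ : Q.PosDef) :
    gaussianCrossEntropy P P - gaussianCrossEntropy P.toBlocks₁₁ P.toBlocks₁₁ ≤
      gaussianCrossEntropy P Q - gaussianCrossEntropy P.toBlocks₁₁ Q.toBlocks₁₁ := by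
  have hAu : IsUnit P.toBlocks₁₁.det := (hP.submatrix Sum.inl_injective).det_pos.ne'.isUnit
  rw [gaussianCrossEntropy_sub_toBlocks₁₁ P hP, gaussianCrossEntropy_sub_toBlocks₁₁ P hQ,
    schurColumn_transpose_mul_mul_self hAu]
  refine gaussianCrossEntropy_self_le_unit (by simpa using hP.det_schurCompl₁₁_pos)
    (by simpa using hQ.det_schurCompl₁₁_pos) ?_
  rw [transpose_mul_mul_eq_schurCompl₁₁_add (isHermitian_iff_isSymm.mp hP.isHermitian) hAu
    (schurColumn Q) (by simp [schurColumn]), Matrix.add_apply, le_add_iff_nonneg_right]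
  simpa using
    (hP.posSemidef.conjTranspose_mul_mul_same (schurColumn Q - schurColumn P)).diag_nonneg

end

lemma gaussianCrossEntropy_psub_insert_sub_le {n : ℕ} {C₀ C₁ : Matrix (Fin n) (Fin n) ℝ}
    (hC₀ : C₀.PosDef) (hC₁ : C₁.PosDef) {i : Fin n} {S : Finset (Fin n)} (hi : i ∉ S) :
    gaussianCrossEntropy (psub C₀ (insert i S)) (psub C₀ (insert i S)) -
        gaussianCrossEntropy (psub C₀ S) (psub C₀ S) ≤
      gaussianCrossEntropy (psub C₀ (insert i S)) (psub C₁ (insert i S)) -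
        gaussianCrossEntropy (psub C₀ S) (psub C₁ S) := by
  let e : {x // x ∈ S} ⊕ Unit ≃ {x // x ∈ insert i S} :=
    ((Equiv.subtypeEquivRight (q := (· ∈ insert i (S : Set (Fin n)))) fun x => by simp).trans
      (Equiv.Set.insert (by simpa using hi))).symm
  have he : Function.Injective fun x => (e x : Fin n) := Subtype.val_injective.comp e.injective
  have key := gaussianCrossEntropy_sub_toBlocks₁₁_le
    (P := (psub C₀ (insert i S)).submatrix e e) (Q := (psub C₁ (insert i S)).submatrix e e)
    (hC₀.submatrix he) (hC₁.submatrix he)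
  rw [gaussianCrossEntropy_submatrix_equiv, gaussianCrossEntropy_submatrix_equiv] at key
  exact key

theorem vecchiaCrossEntropy_ge_general (n : ℕ) (c : Fin n → Finset (Fin n))
    (hc : ∀ i : Fin n, ∀ j ∈ c i, j < i)
    (C₀ : Matrix (Fin n) (Fin n) ℝ) (hC₀ : C₀.PosDef)
    (C₁ : Matrix (Fin n) (Fin n) ℝ) (hC₁ : C₁.PosDef) :
    vecchiaCrossEntropy c C₀ C₁ ≥ vecchiaCrossEntropy c C₀ C₀ :=
  Finset.sum_le_sum fun i _ =>
    gaussianCrossEntropy_psub_insert_sub_le hC₀ hC₁ fun hi => (hc i i hi).false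

/-- the true covariance matrix `C₀` minimizes the Vecchia cross-entropy
`φ_{C₀}` over positive-definite matrices `Σ`, i.e. `C₀` maximizes the expected Vecchia
log-likelihood `E_{y∼N(0,C₀)}[∑ i, log p_Σ(y_i | y_{c(i)})]`. -/
theorem vecchiaCrossEntropy_ge (n : ℕ) (hn : 1 ≤ n) (c : Fin n → Finset (Fin n))
    (hc : ∀ i : Fin n, ∀ j ∈ c i, j < i)
    (C₀ : Matrix (Fin n) (Fin n) ℝ) (hC₀ : C₀.PosDef)
    (C₁ : Matrix (Fin n) (Fin n) ℝ) (hC₁ : C₁.PosDef) :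
    vecchiaCrossEntropy c C₀ C₁ ≥ vecchiaCrossEntropy c C₀ C₀ :=
  vecchiaCrossEntropy_ge_general n c hc C₀ hC₀ C₁ hC₁
end
end

section
/- Let y be a random vector in ℝⁿ with the centered multivariate Gaussian distribution N_n(0, Σ₀), Σ₀ positive definite. Then for every symmetric real n×n matrix M, the expected Vecchia score at the true covariance vanishes: ∑_{i=1}^n [ ( E[ y_{A(i)}ᵀ ((Σ₀)_{A(i)})⁻¹ M_{A(i)} ((Σ₀)_{A(i)})⁻¹ y_{A(i)} ] − tr(((Σ₀)_{A(i)})⁻¹ M_{A(i)}) ) − ( E[ y_{c(i)}ᵀ ((Σ₀)_{c(i)})⁻¹ M_{c(i)} ((Σ₀)_{c(i)})⁻¹ y_{c(i)} ] − tr(((Σ₀)_{c(i)})⁻¹ M_{c(i)}) ) ] = 0. In other words, the Vecchia gradient equations ∇ℓ̂(θ) = 0 are unbiased estimating equations at the true parameter. -/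
open MeasureTheory ProbabilityTheory Matrix

noncomputable section

/-- The centered multivariate Gaussian measure `N_n(0, S)` on `ℝⁿ`, realized as the pushforward
of the i.i.d. standard normal measure under multiplication by the positive-semidefinite square
root of the covariance matrix `S`. -/
def multivariateGaussian {n : ℕ} {S : Matrix (Fin n) (Fin n) ℝ} (hS : S.PosSemidef) :
    Measure (Fin n → ℝ) :=
  (Measure.pi fun _ : Fin n => gaussianReal 0 1).map (fun z => ((hS.1.eigenvectorUnitary : Matrix (Fin n) (Fin n) ℝ) *
    diagonal (Real.sqrt ∘ hS.1.eigenvalues) *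
    (star hS.1.eigenvectorUnitary : Matrix (Fin n) (Fin n) ℝ)).mulVec z)

/-- The subvector of `y` on the index set `S`. -/
def subvec {n : ℕ} (y : Fin n → ℝ) (S : Finset (Fin n)) : {x // x ∈ S} → ℝ :=
  fun i => y (i : Fin n)

/-- One half of the directional derivative, in the direction `M`, of a single Vecchia
log-likelihood term, as a function of the observation `y`:
`y_Sᵀ (C_S)⁻¹ M_S (C_S)⁻¹ y_S − tr((C_S)⁻¹ M_S)`. -/
def vecchiaScoreTerm {n : ℕ} (C M : Matrix (Fin n) (Fin n) ℝ) (S : Finset (Fin n))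
    (y : Fin n → ℝ) : ℝ :=
  subvec y S ⬝ᵥ ((psub C S)⁻¹ * psub M S * (psub C S)⁻¹).mulVec (subvec y S) -
    Matrix.trace ((psub C S)⁻¹ * psub M S)

/-! The Vecchia score terms are unbiased one index set at a time, and for any law with finite
second moments, not only the Gaussian one: if `E[y yᵀ] = Σ₀`, then
`E[y_Sᵀ B y_S] = tr(B (Σ₀)_S)` for every `S` and `B`, and with
`B = (Σ₀)_S⁻¹ M_S (Σ₀)_S⁻¹` this is `tr((Σ₀)_S⁻¹ M_S)`. The Gaussian input is only
`E[y yᵀ] = Σ₀`, read off from Mathlib's `ProbabilityTheory.multivariateGaussian` once the spectral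
square root in `multivariateGaussian` is recognised as `CFC.sqrt Σ₀`. -/

open scoped MatrixOrder

def secondMomentMatrix {ι : Type*} (μ : Measure (ι → ℝ)) : Matrix ι ι ℝ :=
  of fun i j => ∫ y, y i * y j ∂μ

lemma Matrix.dotProduct_mulVec_self_eq_sum {κ R : Type*} [Fintype κ] [CommSemiring R]
    (v : κ → R) (B : Matrix κ κ R) : v ⬝ᵥ B *ᵥ v = ∑ a, ∑ b, B a b * (v a * v b) := by
  simp only [dotProduct, mulVec, Finset.mul_sum]
  exact Finset.sum_congr rfl fun a _ => Finset.sum_congr rfl fun b _ => by ring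

section QuadraticForm

variable {ι κ : Type*} [Fintype κ] {μ : Measure (ι → ℝ)}

lemma integrable_dotProduct_mulVec_comp (hμ : ∀ i, MemLp (fun y => y i) 2 μ) (f : κ → ι)
    (B : Matrix κ κ ℝ) : Integrable (fun y => (y ∘ f) ⬝ᵥ B *ᵥ (y ∘ f)) μ := by
  simp only [dotProduct_mulVec_self_eq_sum, Function.comp_apply]
  exact integrable_finsetSum _ fun a _ => integrable_finsetSum _ fun b _ =>
    ((hμ (f a)).integrable_mul (hμ (f b))).const_mul _

lemma integral_dotProduct_mulVec_comp (hμ : ∀ i, MemLp (fun y => y i) 2 μ) (f : κ → ι)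
    (B : Matrix κ κ ℝ) :
    ∫ y, (y ∘ f) ⬝ᵥ B *ᵥ (y ∘ f) ∂μ = trace (B * (secondMomentMatrix μ).submatrix f f) := by
  have hint (a b : κ) : Integrable (fun y => B a b * (y (f a) * y (f b))) μ :=
    ((hμ (f a)).integrable_mul (hμ (f b))).const_mul _
  calc ∫ y, (y ∘ f) ⬝ᵥ B *ᵥ (y ∘ f) ∂μ
      = ∫ y, ∑ a, ∑ b, B a b * (y (f a) * y (f b)) ∂μ := by
        simp only [dotProduct_mulVec_self_eq_sum, Function.comp_apply]
    _ = ∑ a, ∑ b, B a b * ∫ y, y (f a) * y (f b) ∂μ := by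
        rw [integral_finsetSum _ fun a _ => integrable_finsetSum _ fun b _ => hint a b]
        simp_rw [integral_finsetSum _ fun b _ => hint _ b, integral_const_mul]
    _ = trace (B * (secondMomentMatrix μ).submatrix f f) := by
        simp only [trace, diag, mul_apply, submatrix_apply, secondMomentMatrix, of_apply, mul_comm]

end QuadraticForm

lemma integral_vecchiaScoreTerm_eq_zero {n : ℕ} {μ : Measure (Fin n → ℝ)}
    [IsProbabilityMeasure μ] (hμ : ∀ i, MemLp (fun y => y i) 2 μ) {C : Matrix (Fin n) (Fin n) ℝ}
    (hC : secondMomentMatrix μ = C) (M : Matrix (Fin n) (Fin n) ℝ) {S : Finset (Fin n)}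
    (hCS : IsUnit (psub C S).det) :
    ∫ y, vecchiaScoreTerm C M S y ∂μ = 0 := by
  unfold vecchiaScoreTerm
  set B := (psub C S)⁻¹ * psub M S * (psub C S)⁻¹
  have hint : Integrable (fun y => subvec y S ⬝ᵥ B *ᵥ subvec y S) μ :=
    integrable_dotProduct_mulVec_comp hμ Subtype.val B
  have hquad : ∫ y, subvec y S ⬝ᵥ B *ᵥ subvec y S ∂μ = trace (B * psub C S) :=
    hC ▸ integral_dotProduct_mulVec_comp hμ Subtype.val B
  rw [integral_sub hint (integrable_const _), hquad, integral_const, probReal_univ, one_smul,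
    Matrix.mul_assoc, nonsing_inv_mul _ hCS, Matrix.mul_one, sub_self]

namespace ProbabilityTheory

variable {ι : Type*} [Fintype ι] [DecidableEq ι] {S : Matrix ι ι ℝ}

lemma memLp_eval_multivariateGaussian (hS : S.PosSemidef) (μ : EuclideanSpace ℝ ι) (i : ι) :
    MemLp (fun x : EuclideanSpace ℝ ι => x i) 2 (multivariateGaussian μ S) :=
  (memLp_id_gaussianReal' 2 (by simp)).comp_measurePreserving
    (measurePreserving_eval_multivariateGaussian hS)

lemma integral_eval_multivariateGaussian (hS : S.PosSemidef) (μ : EuclideanSpace ℝ ι) (i : ι) :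
    ∫ x, x i ∂(multivariateGaussian μ S) = μ i := by
  rw [← integral_id_gaussianReal (μ := μ i) (v := (S i i).toNNReal),
    ← (measurePreserving_eval_multivariateGaussian hS).map_eq,
    integral_map (by fun_prop) (by fun_prop)]

lemma integral_eval_mul_eval_multivariateGaussian (hS : S.PosSemidef) (i j : ι) :
    ∫ x, x i * x j ∂(multivariateGaussian 0 S) = S i j := by
  have hcov := covariance_eq_sub (memLp_eval_multivariateGaussian hS 0 i)
    (memLp_eval_multivariateGaussian hS 0 j)
  rw [covariance_eval_multivariateGaussian hS, integral_eval_multivariateGaussian hS,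
    integral_eval_multivariateGaussian hS] at hcov
  simpa using hcov.symm

end ProbabilityTheory

lemma Matrix.PosSemidef.cfcSqrt_eq_spectral {ι : Type*} [Fintype ι] [DecidableEq ι]
    {S : Matrix ι ι ℝ} (hS : S.PosSemidef) :
    CFC.sqrt S = (hS.1.eigenvectorUnitary : Matrix ι ι ℝ) *
      diagonal (Real.sqrt ∘ hS.1.eigenvalues) * (star hS.1.eigenvectorUnitary : Matrix ι ι ℝ) := by
  rw [CFC.sqrt_eq_real_sqrt S hS.nonneg, cfcₙ_eq_cfc, hS.1.cfc_eq, IsHermitian.cfc,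
    Unitary.conjStarAlgAut_apply]
  rfl

section GaussianOnPi

variable {n : ℕ} {S : Matrix (Fin n) (Fin n) ℝ}

lemma multivariateGaussian_eq_map_ofLp (hS : S.PosSemidef) :
    multivariateGaussian hS = (ProbabilityTheory.multivariateGaussian 0 S).map WithLp.ofLp := by
  rw [ProbabilityTheory.multivariateGaussian, ← map_pi_eq_stdGaussian, Measure.map_map,
    Measure.map_map, _root_.multivariateGaussian.eq_1, ← hS.cfcSqrt_eq_spectral]
  · congr 1
    funext z
    simp
  all_goals fun_prop

instance (hS : S.PosSemidef) : IsProbabilityMeasure (multivariateGaussian hS) := by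
  rw [multivariateGaussian_eq_map_ofLp]
  exact Measure.isProbabilityMeasure_map (by fun_prop)

lemma memLp_apply_multivariateGaussian (hS : S.PosSemidef) (i : Fin n) :
    MemLp (fun y => y i) 2 (multivariateGaussian hS) := by
  rw [multivariateGaussian_eq_map_ofLp,
    memLp_map_measure_iff (Measurable.aestronglyMeasurable (by fun_prop)) (by fun_prop)]
  exact ProbabilityTheory.memLp_eval_multivariateGaussian hS 0 i

lemma secondMomentMatrix_multivariateGaussian (hS : S.PosSemidef) :
    secondMomentMatrix (multivariateGaussian hS) = S := by
  ext i j
  rw [secondMomentMatrix, of_apply, multivariateGaussian_eq_map_ofLp,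
    integral_map (by fun_prop) (by fun_prop)]
  exact ProbabilityTheory.integral_eval_mul_eval_multivariateGaussian hS i j

end GaussianOnPi

theorem vecchia_score_unbiased_general (n : ℕ) (c : Fin n → Finset (Fin n))
    (C₀ : Matrix (Fin n) (Fin n) ℝ) (hC₀ : C₀.PosDef)
    (M : Matrix (Fin n) (Fin n) ℝ) :
    ∑ i : Fin n,
      ((∫ y, vecchiaScoreTerm C₀ M (insert i (c i)) y
          ∂(multivariateGaussian hC₀.posSemidef)) -
        (∫ y, vecchiaScoreTerm C₀ M (c i) y ∂(multivariateGaussian hC₀.posSemidef))) = 0 := by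
  have hunbiased (S : Finset (Fin n)) :
      ∫ y, vecchiaScoreTerm C₀ M S y ∂(multivariateGaussian hC₀.posSemidef) = 0 :=
    integral_vecchiaScoreTerm_eq_zero (memLp_apply_multivariateGaussian hC₀.posSemidef)
      (secondMomentMatrix_multivariateGaussian hC₀.posSemidef) M
      ((isUnit_iff_isUnit_det _).mp (hC₀.submatrix Subtype.val_injective).isUnit)
  simp [hunbiased]

/-- if `y ∼ N_n(0, Σ₀)` with `Σ₀` positive definite, then for every symmetric
matrix `M` the expected Vecchia score at the true covariance vanishes; i.e. the Vecchia
gradient equations are unbiased estimating equations at the true parameter. -/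
theorem vecchia_score_unbiased (n : ℕ) (hn : 1 ≤ n) (c : Fin n → Finset (Fin n))
    (hc : ∀ i : Fin n, ∀ j ∈ c i, j < i)
    (C₀ : Matrix (Fin n) (Fin n) ℝ) (hC₀ : C₀.PosDef)
    (M : Matrix (Fin n) (Fin n) ℝ) (hM : M.IsSymm) :
    ∑ i : Fin n,
      ((∫ y, vecchiaScoreTerm C₀ M (insert i (c i)) y
          ∂(multivariateGaussian hC₀.posSemidef)) -
        (∫ y, vecchiaScoreTerm C₀ M (c i) y ∂(multivariateGaussian hC₀.posSemidef))) = 0 :=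
  vecchia_score_unbiased_general n c C₀ hC₀ M

end
end
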